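/- Let ψ_m be convex functions converging pointwise to a convex function ψ with e^{−ψ} integrable, and suppose ψ(x) ≥ ‖T(x+b)‖ − t for all x, with T ∈ GL(n), b ∈ ℝⁿ, t ∈ ℝ. Then for every ε > 0 there is m₀ such that for all m ≥ m₀ and all x ∈ ℝⁿ: ψ_m(x) ≥ (1−ε)‖T(x+b)‖ − t − ε. -/

import Mathlib

open MeasureTheory Filter
noncomputable section

/-- `ℝⁿ` as a Euclidean space. -/
abbrev Euc (n : ℕ) := EuclideanSpace ℝ (Fin n)

/-- `f` is a non-degenerate, upper semicontinuous, integrable log-concave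
function on `ℝⁿ` (the class `LC`): `f ≥ 0`, `f` is upper semicontinuous,
log-concave, integrable with `0 < ∫ f`, and the interior of its support is
non-empty. -/
def IsLC {n : ℕ} (f : Euc n → ℝ) : Prop :=
  (∀ x, 0 ≤ f x) ∧ UpperSemicontinuous f ∧
  (∀ x y : Euc n, ∀ a b : ℝ, 0 ≤ a → 0 ≤ b → a + b = 1 →
      f x ^ a * f y ^ b ≤ f (a • x + b • y)) ∧
  Integrable f ∧ 0 < ∫ x, f x ∧ (interior (Function.support f)).Nonempty

/-- Convexity for an `EReal`-valued function (`ψ : ℝⁿ → ℝ ∪ {∞}`). -/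
def ConvexEReal {n : ℕ} (ψ : Euc n → EReal) : Prop :=
  ∀ x y : Euc n, ∀ a b : ℝ, 0 ≤ a → 0 ≤ b → a + b = 1 →
    ψ (a • x + b • y) ≤ (a : EReal) * ψ x + (b : EReal) * ψ y

/-- `e^{−t}` for `t ∈ ℝ ∪ {±∞}`, with `e^{−∞} = 0`. -/
def expNeg (t : EReal) : ℝ := if t = ⊤ then 0 else Real.exp (-(t.toReal))

/-- The epigraph of `ψ : ℝⁿ → ℝ ∪ {∞}` as a subset of `ℝⁿ × ℝ`. -/
def epiE {n : ℕ} (ψ : Euc n → EReal) : Set (Euc n × ℝ) :=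
  {p | ψ p.1 ≤ (p.2 : EReal)}

section AuxLemmas

/-- Multiplying an `EReal` inequality by a nonnegative real constant. -/
lemma ereal_mul_le {c A : ℝ} (hc : 0 ≤ c) {x : EReal} (hx : x ≤ (A : EReal)) :
    (c : EReal) * x ≤ ((c * A : ℝ) : EReal) := by
  rw [EReal.coe_mul]
  exact mul_le_mul_of_nonneg_left hx (by exact_mod_cast hc)

/-- From `a ≤ b + μ·x` in `EReal` with real `a, b` and `μ > 0`, deduce
`(a - b)/μ ≤ x`. -/
lemma ereal_div_le {a b μ : ℝ} (hμ : 0 < μ) {x : EReal}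
    (h : (a : EReal) ≤ (b : EReal) + (μ : EReal) * x) :
    (((a - b) / μ : ℝ) : EReal) ≤ x := by
  induction x using EReal.rec with
  | bot =>
      rw [EReal.coe_mul_bot_of_pos (by exact_mod_cast hμ), EReal.add_bot] at h
      exact absurd h (by simp)
  | coe y =>
      rw [show (μ : EReal) * (y : EReal) = ((μ * y : ℝ) : EReal) from (EReal.coe_mul μ y).symm,
        ← EReal.coe_add, EReal.coe_le_coe_iff] at h
      rw [EReal.coe_le_coe_iff, div_le_iff₀ hμ]
      linarith
  | top => exact le_top

/-- Jensen-type inequality for `ConvexEReal` functions: a finite convex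
combination of points at which `Φ ≤ A` also satisfies `Φ ≤ A`. -/
lemma convex_sum_le {n : ℕ} {Φ : Euc n → EReal} (hΦ : ConvexEReal Φ) (A : ℝ)
    (s : Finset (Euc n)) : ∀ w : Euc n → ℝ, (∀ i ∈ s, 0 ≤ w i) →
      ∑ i ∈ s, w i = 1 → (∀ i ∈ s, Φ i ≤ (A : EReal)) →
      Φ (∑ i ∈ s, w i • i) ≤ (A : EReal) := by
  classical
  induction s using Finset.induction_on with
  | empty => intro w _ h1 _; simp at h1
  | @insert a s ha ih =>
      intro w hw hsum hA
      rw [Finset.sum_insert ha] at hsum ⊢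
      have hwa : 0 ≤ w a := hw a (Finset.mem_insert_self a s)
      have hc0 : 0 ≤ ∑ i ∈ s, w i :=
        Finset.sum_nonneg fun i hi => hw i (Finset.mem_insert_of_mem hi)
      rcases eq_or_lt_of_le hc0 with hc | hc
      · have hz : ∀ i ∈ s, w i = 0 := by
          intro i hi
          exact (Finset.sum_eq_zero_iff_of_nonneg
            fun j hj => hw j (Finset.mem_insert_of_mem hj)).1 hc.symm i hi
        have hv : ∑ i ∈ s, w i • i = 0 :=
          Finset.sum_eq_zero fun i hi => by rw [hz i hi, zero_smul]
        have hwa1 : w a = 1 := by rw [← hc] at hsum; linarith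
        rw [hv, add_zero, hwa1, one_smul]
        exact hA a (Finset.mem_insert_self a s)
      · have hcne : (∑ i ∈ s, w i) ≠ 0 := ne_of_gt hc
        have hIH : Φ (∑ i ∈ s, (w i / (∑ j ∈ s, w j)) • i) ≤ (A : EReal) := by
          refine ih (fun i => w i / (∑ j ∈ s, w j))
            (fun i hi => div_nonneg (hw i (Finset.mem_insert_of_mem hi)) hc0) ?_
            (fun i hi => hA i (Finset.mem_insert_of_mem hi))
          rw [← Finset.sum_div, div_self hcne]
        have hyc : (∑ j ∈ s, w j) • (∑ i ∈ s, (w i / (∑ j ∈ s, w j)) • i)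
            = ∑ i ∈ s, w i • i := by
          rw [Finset.smul_sum]
          refine Finset.sum_congr rfl fun i hi => ?_
          rw [smul_smul, mul_comm, div_mul_cancel₀ _ hcne]
        have hcomb := hΦ a (∑ i ∈ s, (w i / (∑ j ∈ s, w j)) • i) (w a) (∑ j ∈ s, w j)
          hwa hc0 hsum
        rw [hyc] at hcomb
        refine le_trans hcomb (le_trans (add_le_add
          (ereal_mul_le hwa (hA a (Finset.mem_insert_self a s)))
          (ereal_mul_le hc0 hIH)) ?_)
        rw [← EReal.coe_add]
        apply EReal.coe_le_coe_iff.2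
        have : w a * A + (∑ j ∈ s, w j) * A = (w a + ∑ j ∈ s, w j) * A := by ring
        rw [this, hsum, one_mul]

/-- A `ConvexEReal` function bounded by a real constant on a finite set is
bounded by the same constant on its convex hull. -/
lemma convex_le_on_hull {n : ℕ} {Φ : Euc n → EReal} (hΦ : ConvexEReal Φ)
    {s : Finset (Euc n)} {A : ℝ} (hA : ∀ v ∈ s, Φ v ≤ (A : EReal)) {x : Euc n}
    (hx : x ∈ convexHull ℝ (s : Set (Euc n))) : Φ x ≤ (A : EReal) := by
  rw [Finset.convexHull_eq] at hx
  obtain ⟨w, hw0, hw1, hxx⟩ := hx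
  rw [← hxx, Finset.centerMass_eq_of_sum_1 _ _ hw1]
  simpa only [id_eq] using convex_sum_le hΦ A s w hw0 hw1 hA

/-- Key uniform statement: if convex `Ψ m → ψ` pointwise, `Ψ m` is eventually
bounded above by `A` on a fixed closed ball, and `ψ ≥ g + ε₀` globally for a
continuous real function `g`, then eventually `Ψ m ≥ g` uniformly on any
compact set. -/
lemma uniform_lower {n : ℕ} {Ψ : ℕ → Euc n → EReal} {ψ : Euc n → EReal}
    (hΨconv : ∀ m, ConvexEReal (Ψ m))
    (hptw : ∀ x, Tendsto (fun m => Ψ m x) atTop (nhds (ψ x)))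
    {a : Euc n} {ρ' A : ℝ} (hρ' : 0 < ρ')
    (hupper : ∀ᶠ m in atTop, ∀ q ∈ Metric.closedBall a ρ', Ψ m q ≤ (A : EReal))
    (g : Euc n → ℝ) (hg : Continuous g) (ε₀ : ℝ) (hε₀ : 0 < ε₀)
    (hgψ : ∀ z, ((g z + ε₀ : ℝ) : EReal) ≤ ψ z)
    {K : Set (Euc n)} (hK : IsCompact K) :
    ∀ᶠ m in atTop, ∀ z ∈ K, ((g z : ℝ) : EReal) ≤ Ψ m z := by
  have hloc : ∀ z : Euc n, ∃ η > 0, (∀ z' ∈ Metric.ball z η, g z' ≤ g z + ε₀ / 4) ∧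
      ∀ᶠ m in atTop, ∀ z' ∈ Metric.ball z η, ((g z + ε₀ / 4 : ℝ) : EReal) ≤ Ψ m z' := by
    intro z
    obtain ⟨η₁, hη₁, hgc⟩ : ∃ δ > 0, ∀ z' : Euc n, dist z' z < δ → |g z' - g z| < ε₀ / 4 := by
      obtain ⟨δ, hδ, h⟩ := Metric.continuousAt_iff.1 hg.continuousAt (ε₀ / 4) (by linarith)
      exact ⟨δ, hδ, fun z' hz' => by rw [← Real.dist_eq]; exact h hz'⟩
    have habs : (0 : ℝ) < |A - (g z + ε₀ / 4)| + 1 := by positivity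
    set θ : ℝ := min (min (1/2) (ε₀ / (8 * (|A - (g z + ε₀ / 4)| + 1))))
      (η₁ / (‖z - a‖ + η₁)) with hθdef
    have hθpos : 0 < θ :=
      lt_min (lt_min (by norm_num) (by positivity)) (by positivity)
    have hθhalf : θ ≤ 1/2 := le_trans (min_le_left _ _) (min_le_left _ _)
    have hθA : θ * (|A - (g z + ε₀ / 4)| + 1) ≤ ε₀ / 8 := by
      have h1 : θ ≤ ε₀ / (8 * (|A - (g z + ε₀ / 4)| + 1)) :=
        le_trans (min_le_left _ _) (min_le_right _ _)
      rw [le_div_iff₀ (by positivity)] at h1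
      linarith
    have hθη : θ * (‖z - a‖ + η₁) ≤ η₁ := by
      have h1 : θ ≤ η₁ / (‖z - a‖ + η₁) := min_le_right _ _
      rw [le_div_iff₀ (by positivity)] at h1
      exact h1
    have hμpos : (0 : ℝ) < 1 - θ := by linarith
    have h1μ : (0 : ℝ) < 1 - (1 - θ) := by simpa using hθpos
    set p : Euc n := a + (1 - θ) • (z - a) with hpdef
    have hpz : dist p z < η₁ := by
      have hdiff : p - z = -(θ • (z - a)) := by rw [hpdef]; module
      rw [dist_eq_norm, hdiff, norm_neg, norm_smul, Real.norm_eq_abs, abs_of_pos hθpos]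
      have hθη₁ : 0 < θ * η₁ := by positivity
      calc θ * ‖z - a‖ = θ * (‖z - a‖ + η₁) - θ * η₁ := by ring
        _ ≤ η₁ - θ * η₁ := by linarith
        _ < η₁ := by linarith
    have hψp : ((g z + 3 * ε₀ / 4 : ℝ) : EReal) ≤ ψ p := by
      refine le_trans ?_ (hgψ p)
      apply EReal.coe_le_coe_iff.2
      have h2 := abs_lt.1 (hgc p hpz)
      linarith [h2.1, h2.2]
    have hev1 : ∀ᶠ m in atTop, ((g z + 3 * ε₀ / 4 - ε₀ / 8 : ℝ) : EReal) < Ψ m p := by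
      refine (hptw p).eventually_const_lt (lt_of_lt_of_le ?_ hψp)
      exact EReal.coe_lt_coe_iff.2 (by linarith)
    set η : ℝ := min η₁ ((1 - (1 - θ)) / (1 - θ) * ρ') with hηdef
    have hηpos : 0 < η := lt_min hη₁ (by positivity)
    refine ⟨η, hηpos, ?_, ?_⟩
    · intro z' hz'
      have h2 := abs_lt.1 (hgc z' (lt_of_lt_of_le (Metric.mem_ball.1 hz') (min_le_left _ _)))
      linarith [h2.1, h2.2]
    · filter_upwards [hupper, hev1] with m hup hpm
      intro z' hz'
      set q : Euc n := a + ((1 - θ) / (1 - (1 - θ))) • (z - z') with hqdef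
      have hqball : q ∈ Metric.closedBall a ρ' := by
        rw [Metric.mem_closedBall, dist_eq_norm]
        have hqa : q - a = ((1 - θ) / (1 - (1 - θ))) • (z - z') := by
          rw [hqdef]; abel
        rw [hqa, norm_smul, Real.norm_eq_abs, abs_of_pos (by positivity)]
        have hzz : ‖z - z'‖ < η := by
          rw [norm_sub_rev, ← dist_eq_norm]
          exact Metric.mem_ball.1 hz'
        have hη2 : η ≤ (1 - (1 - θ)) / (1 - θ) * ρ' := min_le_right _ _
        calc ((1 - θ) / (1 - (1 - θ))) * ‖z - z'‖
            ≤ ((1 - θ) / (1 - (1 - θ))) * ((1 - (1 - θ)) / (1 - θ) * ρ') := by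
              apply mul_le_mul_of_nonneg_left (le_trans hzz.le hη2) (by positivity)
          _ = ρ' := by field_simp
      have hkey : (1 - (1 - θ)) • (((1 - θ) / (1 - (1 - θ))) • (z - z'))
          = (1 - θ) • (z - z') := by
        rw [smul_smul, mul_comm, div_mul_cancel₀ _ (ne_of_gt h1μ)]
      have hpcomb : p = (1 - (1 - θ)) • q + (1 - θ) • z' := by
        rw [hqdef, smul_add, hkey, hpdef]
        module
      have hconv := hΨconv m q z' (1 - (1 - θ)) (1 - θ) (le_of_lt h1μ) (le_of_lt hμpos)
        (by ring)
      rw [← hpcomb] at hconv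
      have hq := hup q hqball
      have hchain : ((g z + 3 * ε₀ / 4 - ε₀ / 8 : ℝ) : EReal)
          ≤ (((1 - (1 - θ)) * A : ℝ) : EReal) + ((1 - θ : ℝ) : EReal) * Ψ m z' := by
        refine le_trans hpm.le (le_trans hconv ?_)
        exact add_le_add_left (ereal_mul_le (le_of_lt h1μ) hq) _
      have hfin := ereal_div_le hμpos hchain
      refine le_trans ?_ hfin
      apply EReal.coe_le_coe_iff.2
      rw [le_div_iff₀ hμpos]
      have habs1 : A - (g z + ε₀ / 4) ≤ |A - (g z + ε₀ / 4)| := le_abs_self _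
      nlinarith [hθA, hθpos, hθhalf, hε₀,
        mul_le_mul_of_nonneg_left habs1 hθpos.le]
  choose η hη hgb hev using hloc
  obtain ⟨tt, _, hcov⟩ := hK.elim_nhds_subcover (fun z => Metric.ball z (η z))
    (fun x _ => Metric.ball_mem_nhds x (hη x))
  have hall : ∀ᶠ m in atTop, ∀ z ∈ tt, ∀ z' ∈ Metric.ball z (η z),
      ((g z + ε₀ / 4 : ℝ) : EReal) ≤ Ψ m z' :=
    (Filter.eventually_all_finset tt).2 fun z _ => hev z
  filter_upwards [hall] with m hm z hz
  obtain ⟨i, hi, hzi⟩ := Set.mem_iUnion₂.1 (hcov hz)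
  refine le_trans ?_ (hm i hi z hzi)
  exact EReal.coe_le_coe_iff.2 (by linarith [hgb i z hzi])

end AuxLemmas

set_option maxHeartbeats 2000000 in
/-- if convex `ψ_m → ψ` pointwise, `e^{−ψ}` is integrable and
non-degenerate, and `ψ(x) ≥ ‖T(x+b)‖ − t` with `T ∈ GL(n)`, then for every
`ε > 0` there is `m₀` such that for all `m ≥ m₀` and all `x`,
`ψ_m(x) ≥ (1−ε)‖T(x+b)‖ − t − ε`. -/
theorem loewner_lower_bound_convergence (n : ℕ) (Ψ : ℕ → Euc n → EReal)
    (ψ : Euc n → EReal) (hΨconv : ∀ m, ConvexEReal (Ψ m))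
    (hconv : ConvexEReal ψ)
    (hptw : ∀ x, Tendsto (fun m => Ψ m x) atTop (nhds (ψ x)))
    (hLC : IsLC (fun x => expNeg (ψ x)))
    (T : Euc n ≃ₗ[ℝ] Euc n) (b : Euc n) (t : ℝ)
    (hdom : ∀ x, ((‖T (x + b)‖ - t : ℝ) : EReal) ≤ ψ x)
    (ε : ℝ) (hε : 0 < ε) :
    ∃ m₀ : ℕ, ∀ m ≥ m₀, ∀ x : Euc n,
      (((1 - ε) * ‖T (x + b)‖ - t - ε : ℝ) : EReal) ≤ Ψ m x := by
  classical
  obtain ⟨ε', hε'def⟩ : ∃ e : ℝ, e = min ε (1/2) := ⟨_, rfl⟩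
  have hε'pos : 0 < ε' := by rw [hε'def]; exact lt_min hε (by norm_num)
  have hε'le : ε' ≤ ε := by rw [hε'def]; exact min_le_left _ _
  have hε'half : ε' ≤ 1/2 := by rw [hε'def]; exact min_le_right _ _
  -- a ball on which ψ is finite
  obtain ⟨x₀, hx₀⟩ := hLC.2.2.2.2.2
  obtain ⟨ρ, hρpos, hρball⟩ :=
    Metric.mem_nhds_iff.1 (mem_interior_iff_mem_nhds.1 hx₀)
  have hψball : ∀ v ∈ Metric.ball x₀ ρ, ψ v ≠ ⊤ := by
    intro v hv htop
    have hsupp := hρball hv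
    rw [Function.mem_support] at hsupp
    apply hsupp
    simp only [expNeg, htop, if_pos]
  -- the finite vertex set: center plus cross-polytope vertices
  obtain ⟨ρ₂, hρ₂def⟩ : ∃ e : ℝ, e = ρ / 2 := ⟨_, rfl⟩
  have hρ₂pos : 0 < ρ₂ := by rw [hρ₂def]; linarith
  obtain ⟨s, hsdef⟩ : ∃ e : Finset (Euc n), e =
    insert x₀ ((Finset.univ : Finset (Fin n × Bool)).image
      (fun kb => x₀ + (if kb.2 then ρ₂ else -ρ₂) • EuclideanSpace.single kb.1 (1:ℝ))) := ⟨_, rfl⟩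
  have hsmem : ∀ v ∈ s, v ∈ Metric.ball x₀ ρ := by
    intro v hv
    rw [hsdef, Finset.mem_insert] at hv
    rcases hv with rfl | hv
    · exact Metric.mem_ball_self hρpos
    · obtain ⟨kb, -, rfl⟩ := Finset.mem_image.1 hv
      rw [Metric.mem_ball, dist_eq_norm, add_sub_cancel_left, norm_smul, Real.norm_eq_abs,
        EuclideanSpace.norm_single, norm_one, mul_one]
      have : |if kb.2 then ρ₂ else -ρ₂| = ρ₂ := by
        rcases Bool.eq_false_or_eq_true kb.2 with h | h <;>
          simp [h, abs_neg, abs_of_pos hρ₂pos]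
      rw [this, hρ₂def]; linarith
  have hsne : s.Nonempty := ⟨x₀, by rw [hsdef]; exact Finset.mem_insert_self _ _⟩
  obtain ⟨A, hAdef⟩ : ∃ e : ℝ, e = (s.sup' hsne fun v => (ψ v).toReal) + 1 := ⟨_, rfl⟩
  have hsA : ∀ v ∈ s, ψ v < (A : EReal) := by
    intro v hv
    have hnt : ψ v ≠ ⊤ := hψball v (hsmem v hv)
    have hnb : ψ v ≠ ⊥ := (lt_of_lt_of_le (EReal.bot_lt_coe _) (hdom v)).ne'
    rw [← EReal.coe_toReal hnt hnb]
    apply EReal.coe_lt_coe_iff.2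
    have h9 := Finset.le_sup' (fun v => (ψ v).toReal) hv
    rw [hAdef]
    exact lt_of_le_of_lt h9 (by linarith)
  -- the affine span of the vertices is everything
  have hspan : affineSpan ℝ (s : Set (Euc n)) = ⊤ := by
    rw [AffineSubspace.affineSpan_eq_top_iff_vectorSpan_eq_top_of_nonempty ℝ (Euc n) (Euc n)
      (Finset.coe_nonempty.2 hsne)]
    rw [eq_top_iff, ← (EuclideanSpace.basisFun (Fin n) ℝ).toBasis.span_eq, Submodule.span_le]
    rintro - ⟨k, rfl⟩
    rw [OrthonormalBasis.coe_toBasis, EuclideanSpace.basisFun_apply]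
    have hv1 : (x₀ + ρ₂ • EuclideanSpace.single k (1:ℝ)) ∈ (s : Set (Euc n)) := by
      rw [hsdef]
      push_cast
      refine Set.mem_insert_iff.2 (Or.inr ?_)
      exact ⟨(k, true), Set.mem_univ _, by simp⟩
    have hv0 : x₀ ∈ (s : Set (Euc n)) := by
      rw [hsdef]; push_cast; exact Set.mem_insert_iff.2 (Or.inl rfl)
    have hsub := vsub_mem_vectorSpan ℝ hv1 hv0
    have heq : (x₀ + ρ₂ • EuclideanSpace.single k (1:ℝ)) -ᵥ x₀
        = ρ₂ • EuclideanSpace.single k (1:ℝ) := by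
      rw [vsub_eq_sub, add_sub_cancel_left]
    rw [heq] at hsub
    have hmem := Submodule.smul_mem (vectorSpan ℝ (s : Set (Euc n))) ρ₂⁻¹ hsub
    rw [smul_smul, inv_mul_cancel₀ (ne_of_gt hρ₂pos), one_smul] at hmem
    exact hmem
  -- the anchor ball inside the convex hull of the vertices
  obtain ⟨x₁, hx₁⟩ := interior_convexHull_nonempty_iff_affineSpan_eq_top.2 hspan
  obtain ⟨ρ'2, hρ'2, hball2⟩ := Metric.isOpen_iff.1 isOpen_interior x₁ hx₁
  obtain ⟨ρ', hρ'def⟩ : ∃ e : ℝ, e = ρ'2 / 2 := ⟨_, rfl⟩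
  have hρ'pos : 0 < ρ' := by rw [hρ'def]; linarith
  have hballhull : Metric.closedBall x₁ ρ' ⊆ convexHull ℝ (s : Set (Euc n)) := by
    intro q hq
    have hqball : q ∈ Metric.ball x₁ ρ'2 := by
      rw [Metric.mem_ball]
      calc dist q x₁ ≤ ρ' := Metric.mem_closedBall.1 hq
        _ < ρ'2 := by rw [hρ'def]; linarith
    exact interior_subset (hball2 hqball)
  -- eventual upper bound on the anchor ball
  have hvert : ∀ᶠ m in atTop, ∀ v ∈ s, Ψ m v ≤ (A : EReal) :=
    (Filter.eventually_all_finset s).2 fun v hv =>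
      ((hptw v).eventually_lt_const (hsA v hv)).mono fun m h => h.le
  have hupper : ∀ᶠ m in atTop, ∀ q ∈ Metric.closedBall x₁ ρ', Ψ m q ≤ (A : EReal) := by
    filter_upwards [hvert] with m hm q hq
    exact convex_le_on_hull (hΨconv m) hm (hballhull hq)
  -- continuity and operator norm bounds for T
  have hTlin : Continuous fun v : Euc n => T v := T.toLinearMap.continuous_of_finiteDimensional
  have hhcont : Continuous fun x : Euc n => ‖T (x + b)‖ :=
    (hTlin.comp (continuous_id.add continuous_const)).norm
  obtain ⟨S, hSdef⟩ : ∃ e : Euc n →L[ℝ] Euc n,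
      e = LinearMap.toContinuousLinearMap (T.symm : Euc n ≃ₗ[ℝ] Euc n).toLinearMap := ⟨_, rfl⟩
  obtain ⟨C, hCdef⟩ : ∃ e : ℝ, e = ‖S‖ + 1 := ⟨_, rfl⟩
  have hCpos : 0 < C := by rw [hCdef]; positivity
  have hlowbd : ∀ y : Euc n, ‖y + b‖ ≤ C * ‖T (y + b)‖ := by
    intro y
    have h1 : ‖S (T (y + b))‖ ≤ ‖S‖ * ‖T (y + b)‖ := S.le_opNorm _
    have h2 : S (T (y + b)) = y + b := by
      rw [hSdef]
      simp [LinearMap.coe_toContinuousLinearMap']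
    rw [h2] at h1
    rw [hCdef]
    nlinarith [norm_nonneg (T (y + b))]
  -- the main radius
  obtain ⟨M₀, hM₀def⟩ : ∃ e : ℝ, e = |t| + 1 + max A 0 + ‖T (x₁ + b)‖ := ⟨_, rfl⟩
  have hM₀pos : 0 < M₀ := by
    rw [hM₀def]
    have := abs_nonneg t
    have := le_max_right A 0
    have := norm_nonneg (T (x₁ + b))
    linarith
  obtain ⟨r, hrdef⟩ : ∃ e : ℝ, e = ‖x₁ + b‖ + C * ((M₀ + 1) / ε') := ⟨_, rfl⟩
  have hrpos : 0 < r := by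
    rw [hrdef]
    have h0 : 0 < C * ((M₀ + 1) / ε') := mul_pos hCpos (div_pos (by linarith) hε'pos)
    linarith [norm_nonneg (x₁ + b)]
  -- two applications of the uniform lower bound
  have happ1 : ∀ᶠ m in atTop, ∀ z ∈ Metric.closedBall x₁ r,
      (((fun z : Euc n => (1 - ε') * ‖T (z + b)‖ - t - ε') z : ℝ) : EReal) ≤ Ψ m z := by
    refine uniform_lower hΨconv hptw hρ'pos hupper
      (fun z : Euc n => (1 - ε') * ‖T (z + b)‖ - t - ε')
      (((continuous_const.mul hhcont).sub continuous_const).sub continuous_const)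
      ε' hε'pos ?_ (isCompact_closedBall x₁ r)
    intro z
    refine le_trans ?_ (hdom z)
    apply EReal.coe_le_coe_iff.2
    show (1 - ε') * ‖T (z + b)‖ - t - ε' + ε' ≤ ‖T (z + b)‖ - t
    nlinarith [norm_nonneg (T (z + b)), hε'pos.le]
  have happ2 : ∀ᶠ m in atTop, ∀ z ∈ Metric.closedBall x₁ r,
      (((fun z : Euc n => ‖T (z + b)‖ - t - 1) z : ℝ) : EReal) ≤ Ψ m z := by
    refine uniform_lower hΨconv hptw hρ'pos hupper
      (fun z : Euc n => ‖T (z + b)‖ - t - 1)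
      ((hhcont.sub continuous_const).sub continuous_const)
      1 one_pos ?_ (isCompact_closedBall x₁ r)
    intro z
    show ((‖T (z + b)‖ - t - 1 + 1 : ℝ) : EReal) ≤ ψ z
    have heq : (‖T (z + b)‖ - t - 1 + 1 : ℝ) = ‖T (z + b)‖ - t := by ring
    rw [heq]
    exact hdom z
  obtain ⟨m₀, hm₀⟩ := Filter.eventually_atTop.1 ((happ1.and happ2).and hupper)
  refine ⟨m₀, fun m hm x => ?_⟩
  obtain ⟨⟨h1, h2⟩, h3⟩ := hm₀ m hm
  have hxnn : (0:ℝ) ≤ ‖T (x + b)‖ := norm_nonneg _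
  have hmono : ((1 - ε) * ‖T (x + b)‖ - t - ε : ℝ)
      ≤ (1 - ε') * ‖T (x + b)‖ - t - ε' := by nlinarith [hε'le, hxnn]
  rcases le_or_gt (dist x x₁) r with hxr | hxr
  · exact le_trans (EReal.coe_le_coe_iff.2 hmono) (h1 x (Metric.mem_closedBall.2 hxr))
  · have hDpos : 0 < dist x x₁ := lt_trans hrpos hxr
    obtain ⟨l, hldef⟩ : ∃ e : ℝ, e = r / dist x x₁ := ⟨_, rfl⟩
    have hl0 : 0 < l := by rw [hldef]; exact div_pos hrpos hDpos
    have hl1 : l < 1 := by rw [hldef]; exact (div_lt_one hDpos).2 hxr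
    obtain ⟨y, hydef⟩ : ∃ e : Euc n, e = x₁ + l • (x - x₁) := ⟨_, rfl⟩
    have hynorm : ‖y - x₁‖ = r := by
      rw [hydef, add_sub_cancel_left, norm_smul, Real.norm_eq_abs, abs_of_pos hl0,
        ← dist_eq_norm, hldef, div_mul_cancel₀ _ (ne_of_gt hDpos)]
    have hyK : y ∈ Metric.closedBall x₁ r := by
      rw [Metric.mem_closedBall, dist_eq_norm, hynorm]
    have hyc := h2 y hyK
    have hx₁b := h3 x₁ (Metric.mem_closedBall_self hρ'pos.le)
    have hconvm := hΨconv m x₁ x (1 - l) l (by linarith) hl0.le (by ring)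
    have hyeq : (1 - l) • x₁ + l • x = y := by rw [hydef]; module
    rw [hyeq] at hconvm
    have hchain : ((‖T (y + b)‖ - t - 1 : ℝ) : EReal)
        ≤ (((1 - l) * A : ℝ) : EReal) + ((l : ℝ) : EReal) * Ψ m x :=
      le_trans hyc (le_trans hconvm
        (add_le_add_left (ereal_mul_le (by linarith) hx₁b) _))
    have hfin := ereal_div_le hl0 hchain
    refine le_trans (EReal.coe_le_coe_iff.2 ?_) hfin
    -- the remaining real inequality
    have f2 : M₀ + 1 ≤ ε' * ‖T (y + b)‖ := by
      have htri : ‖y - x₁‖ ≤ ‖y + b‖ + ‖x₁ + b‖ := by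
        have hyd : y - x₁ = (y + b) - (x₁ + b) := by abel
        rw [hyd]; exact norm_sub_le _ _
      have hyb : r - ‖x₁ + b‖ ≤ ‖y + b‖ := by rw [← hynorm]; linarith
      have hrr : r - ‖x₁ + b‖ = C * ((M₀ + 1) / ε') := by rw [hrdef]; ring
      have h6 : C * ((M₀ + 1) / ε') ≤ C * ‖T (y + b)‖ := by
        have h7 := hlowbd y
        rw [hrr] at hyb
        linarith
      have h5 : (M₀ + 1) / ε' ≤ ‖T (y + b)‖ := le_of_mul_le_mul_left h6 hCpos
      rw [div_le_iff₀ hε'pos] at h5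
      linarith
    have f1 : l * ‖T (x + b)‖ ≤ ‖T (y + b)‖ + (1 - l) * ‖T (x₁ + b)‖ := by
      have hvec : l • (x + b) = (y + b) - (1 - l) • (x₁ + b) := by rw [hydef]; module
      have hTvec : l • (T (x + b)) = T (y + b) - (1 - l) • (T (x₁ + b)) := by
        have h7 := congrArg (fun v => T v) hvec
        simpa [_root_.map_smul, _root_.map_sub, _root_.map_add] using h7
      have h8 := congrArg norm hTvec
      rw [norm_smul, Real.norm_eq_abs, abs_of_pos hl0] at h8
      rw [h8]
      refine le_trans (norm_sub_le _ _) ?_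
      rw [norm_smul, Real.norm_eq_abs, abs_of_pos (by linarith : (0:ℝ) < 1 - l)]
    rw [le_div_iff₀ hl0]
    have e0 : ((1 - ε) * ‖T (x + b)‖ - t - ε) * l
        ≤ ((1 - ε') * ‖T (x + b)‖ - t - ε') * l :=
      mul_le_mul_of_nonneg_right hmono hl0.le
    have e1 : (1 - ε') * (l * ‖T (x + b)‖)
        ≤ (1 - ε') * (‖T (y + b)‖ + (1 - l) * ‖T (x₁ + b)‖) :=
      mul_le_mul_of_nonneg_left f1 (by linarith)
    have g1 : (1 - l) * t ≤ |t| := by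
      nlinarith [le_abs_self t, neg_abs_le t, abs_nonneg t, hl0.le, hl1.le]
    have g2 : (1 - l) * A ≤ max A 0 := by
      rcases le_or_gt 0 A with hA0 | hA0
      · nlinarith [le_max_left A 0, hl0.le, hl1.le]
      · nlinarith [le_max_right A 0, hl0.le, hl1.le]
    have g3 : (1 - ε') * ((1 - l) * ‖T (x₁ + b)‖) ≤ ‖T (x₁ + b)‖ := by
      nlinarith [norm_nonneg (T (x₁ + b)), hl0.le, hl1.le, hε'pos.le, hε'half,
        mul_nonneg hl0.le (norm_nonneg (T (x₁ + b))),
        mul_nonneg hε'pos.le (norm_nonneg (T (x₁ + b)))]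
    have hM₀expand : M₀ = |t| + 1 + max A 0 + ‖T (x₁ + b)‖ := hM₀def
    nlinarith [e0, e1, f2, g1, g2, g3, hl0.le, hl1.le, hε'pos,
      mul_nonneg hε'pos.le hl0.le]

end
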